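/- In the A_1 rational DAHA H'' = ⟨x, y, s⟩ with relations [y, x] = 1/2 + k·s, s² = 1, sxs = -x, sys = -y, the element (y + x) satisfies: for every h ∈ H'', there exist unique constants c_{aδb} such that h = ∑ c_{aδb} (y + x)^{*a} s^δ (y + x)^b with δ ∈ {0,1}, where * is the anti-involution x* = x, y* = -y, s* = s. In particular, the assignment {h} = ∑_{δ} c_{0δ0} is a well-defined linear functional (the coinvariant) satisfying {h*} = {h}. -/
import Mathlib


section Helpers

variable {A : Type*} [Ring A] [Algebra ℝ A]

lemma conj_helper (S U : A) (hsu : S * U = -(U * S)) (hss : S * S = 1) :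
    S * U * S = -U := by
  rw [hsu, neg_mul, mul_assoc, hss, mul_one]

lemma comm_helper (k : ℝ) (U Vm S : A) (hVU : Vm * U = U * Vm + 1 + (2 * k) • S) :
    ((1/2 : ℝ) • (Vm - U)) * ((1/2 : ℝ) • (U + Vm)) -
      ((1/2 : ℝ) • (U + Vm)) * ((1/2 : ℝ) • (Vm - U)) = (1/2 : ℝ) • 1 + k • S := by
  simp only [smul_mul_assoc, mul_smul_comm, sub_mul, mul_sub, add_mul, mul_add, smul_sub,
    smul_add]
  rw [hVU]
  module

lemma conj_smul_add_helper (c : ℝ) (S U Vm : A) (hsus : S * U * S = -U) (hsvs : S * Vm * S = -Vm) :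
    S * (c • (U + Vm)) * S = -(c • (U + Vm)) := by
  simp only [mul_smul_comm, smul_mul_assoc, mul_add, add_mul]
  rw [hsus, hsvs]
  module

lemma conj_smul_sub_helper (c : ℝ) (S U Vm : A) (hsus : S * U * S = -U) (hsvs : S * Vm * S = -Vm) :
    S * (c • (Vm - U)) * S = -(c • (Vm - U)) := by
  simp only [mul_smul_comm, smul_mul_assoc, mul_sub, sub_mul]
  rw [hsus, hsvs]
  module

end Helpers

namespace ShapRep

abbrev V : Type := (ℕ × Fin 2 × ℕ) →₀ ℝ

noncomputable def e (p : ℕ × Fin 2 × ℕ) : V := Finsupp.single p 1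

noncomputable def Umap : V →ₗ[ℝ] V :=
  Finsupp.lsum ℝ fun p => LinearMap.toSpanSingleton ℝ V (e (p.1 + 1, p.2.1, p.2.2))

noncomputable def Smap : V →ₗ[ℝ] V :=
  Finsupp.lsum ℝ fun p =>
    LinearMap.toSpanSingleton ℝ V (((-1 : ℝ) ^ p.1) • e (p.1, p.2.1 + 1, p.2.2))

noncomputable def Vmap (k : ℝ) : V →ₗ[ℝ] V :=
  Finsupp.lsum ℝ fun p =>
    LinearMap.toSpanSingleton ℝ V
      (((-1 : ℝ) ^ (p.2.1 : ℕ)) • e (p.1, p.2.1, p.2.2 + 1)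
        + (p.1 : ℝ) • e (p.1 - 1, p.2.1, p.2.2)
        + (if Odd p.1 then 2 * k else 0) • e (p.1 - 1, p.2.1 + 1, p.2.2))

lemma smul_e (r : ℝ) (p : ℕ × Fin 2 × ℕ) : r • e p = Finsupp.single p r := by
  simp [e, Finsupp.smul_single']

lemma Umap_e (p : ℕ × Fin 2 × ℕ) :
    Umap (e p) = e (p.1 + 1, p.2.1, p.2.2) := by
  rw [e, Umap, Finsupp.lsum_single, LinearMap.toSpanSingleton_apply, one_smul]

lemma Smap_e (p : ℕ × Fin 2 × ℕ) :
    Smap (e p) = ((-1 : ℝ) ^ p.1) • e (p.1, p.2.1 + 1, p.2.2) := by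
  rw [e, Smap, Finsupp.lsum_single, LinearMap.toSpanSingleton_apply, one_smul]

lemma Vmap_e (k : ℝ) (p : ℕ × Fin 2 × ℕ) :
    Vmap k (e p) =
      ((-1 : ℝ) ^ (p.2.1 : ℕ)) • e (p.1, p.2.1, p.2.2 + 1)
        + (p.1 : ℝ) • e (p.1 - 1, p.2.1, p.2.2)
        + (if Odd p.1 then 2 * k else 0) • e (p.1 - 1, p.2.1 + 1, p.2.2) := by
  rw [e, Vmap, Finsupp.lsum_single, LinearMap.toSpanSingleton_apply, one_smul]

lemma lhom_e_ext {f g : V →ₗ[ℝ] V} (h : ∀ p, f (e p) = g (e p)) : f = g := by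
  apply Finsupp.lhom_ext
  intro p r
  have h1 : Finsupp.single p r = r • e p := (smul_e r p).symm
  rw [h1, map_smul, map_smul, h p]

lemma rel_SS : (Smap : Module.End ℝ V) * Smap = 1 := by
  apply lhom_e_ext
  intro ⟨a, δ, b⟩
  show Smap (Smap (e (a, δ, b))) = e (a, δ, b)
  have hδ : δ + 1 + 1 = δ := by fin_cases δ <;> decide
  rw [Smap_e, map_smul, Smap_e]
  dsimp only
  rw [hδ, smul_smul, ← mul_pow]
  norm_num

lemma rel_SU : (Smap : Module.End ℝ V) * Umap = -(Umap * Smap : Module.End ℝ V) := by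
  apply lhom_e_ext
  intro ⟨a, δ, b⟩
  show Smap (Umap (e (a, δ, b))) = -(Umap (Smap (e (a, δ, b))))
  rw [Umap_e, Smap_e, Smap_e, map_smul, Umap_e]
  dsimp only
  rw [pow_succ]
  module

lemma rel_SV (k : ℝ) : (Smap : Module.End ℝ V) * Vmap k = -(Vmap k * Smap : Module.End ℝ V) := by
  apply lhom_e_ext
  intro ⟨a, δ, b⟩
  show Smap (Vmap k (e (a, δ, b))) = -(Vmap k (Smap (e (a, δ, b))))
  have hδ : δ + 1 + 1 = δ := by fin_cases δ <;> decide
  rw [Vmap_e, Smap_e, map_smul, Vmap_e, map_add, map_add, map_smul, map_smul, map_smul,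
    Smap_e, Smap_e, Smap_e]
  dsimp only
  have hpow : ((-1:ℝ)) ^ ((δ+1 : Fin 2) : ℕ) = -((-1:ℝ) ^ ((δ : Fin 2) : ℕ)) := by
    fin_cases δ <;> simp <;> norm_num [show ((2:Fin 2):ℕ) = 0 from rfl]
  rw [hδ, hpow]
  rcases a with _ | n
  · norm_num
  · have hs : n + 1 - 1 = n := rfl
    rw [hs, pow_succ]
    rcases Nat.even_or_odd n with hn | hn
    · have h1 : Odd (n + 1) := Even.add_one hn
      rw [if_pos h1, hn.neg_one_pow]
      module
    · have h1 : ¬ Odd (n + 1) := by simp [Nat.odd_add_one, hn]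
      rw [if_neg h1, hn.neg_one_pow]
      module

lemma rel_VU (k : ℝ) : (Vmap k : Module.End ℝ V) * Umap
    = Umap * Vmap k + 1 + (2 * k) • (Smap : Module.End ℝ V) := by
  apply lhom_e_ext
  intro ⟨a, δ, b⟩
  show Vmap k (Umap (e (a, δ, b)))
    = Umap (Vmap k (e (a, δ, b))) + e (a, δ, b) + (2 * k) • Smap (e (a, δ, b))
  rw [Umap_e, Vmap_e, Vmap_e, map_add, map_add, map_smul, map_smul, map_smul,
    Umap_e, Umap_e, Umap_e, Smap_e]
  dsimp only
  rcases a with _ | n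
  · norm_num
  · have hs : n + 1 - 1 = n := rfl
    have hs2 : n + 1 + 1 - 1 = n + 1 := rfl
    rw [hs, hs2]
    rcases Nat.even_or_odd n with hn | hn
    · have h1 : Odd (n + 1) := Even.add_one hn
      have h2 : ¬ Odd (n + 1 + 1) := by simp [Nat.odd_add_one, h1]
      rw [if_pos h1, if_neg h2, h1.neg_one_pow]
      push_cast
      module
    · have h1 : ¬ Odd (n + 1) := by simp [Nat.odd_add_one, hn]
      have h2 : Odd (n + 1 + 1) := by
        rw [Nat.odd_add_one]
        exact h1
      have h3 : Even (n + 1) := Nat.not_odd_iff_even.mp h1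
      rw [if_neg h1, if_pos h2, h3.neg_one_pow]
      push_cast
      module


noncomputable def Xop (k : ℝ) : Module.End ℝ V := (1/2 : ℝ) • (Umap + Vmap k : Module.End ℝ V)
noncomputable def Yop (k : ℝ) : Module.End ℝ V := (1/2 : ℝ) • (Vmap k - Umap : Module.End ℝ V)

lemma rel_End_comm (k : ℝ) : Yop k * Xop k - Xop k * Yop k
    = (1/2 : ℝ) • (1 : Module.End ℝ V) + k • (Smap : Module.End ℝ V) :=
  comm_helper k Umap (Vmap k) Smap (rel_VU k)

lemma rel_SUS (k : ℝ) : (Smap : Module.End ℝ V) * Umap * Smap = -Umap :=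
  conj_helper Smap Umap rel_SU rel_SS

lemma rel_SVS (k : ℝ) : (Smap : Module.End ℝ V) * Vmap k * Smap = -Vmap k :=
  conj_helper Smap (Vmap k) (rel_SV k) rel_SS

lemma rel_End_sxs (k : ℝ) : Smap * Xop k * Smap = -Xop k :=
  conj_smul_add_helper (1/2 : ℝ) Smap Umap (Vmap k) (rel_SUS k) (rel_SVS k)

lemma rel_End_sys (k : ℝ) : Smap * Yop k * Smap = -Yop k :=
  conj_smul_sub_helper (1/2 : ℝ) Smap Umap (Vmap k) (rel_SUS k) (rel_SVS k)

lemma Vpow_e (k : ℝ) (b : ℕ) : (Vmap k ^ b) (e (0, 0, 0)) = e (0, 0, b) := by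
  induction b with
  | zero => rw [pow_zero]; rfl
  | succ n ih =>
    rw [pow_succ', Module.End.mul_apply, ih, Vmap_e]
    norm_num

lemma Spow_e (δ : Fin 2) (b : ℕ) :
    ((Smap : Module.End ℝ V) ^ (δ : ℕ)) (e (0, 0, b)) = e (0, δ, b) := by
  fin_cases δ
  · rw [pow_zero]; rfl
  · rw [pow_one, Smap_e]
    norm_num

lemma Upow_e (a : ℕ) (δ : Fin 2) (b : ℕ) :
    ((Umap : Module.End ℝ V) ^ a) (e (0, δ, b)) = e (a, δ, b) := by
  induction a with
  | zero => rw [pow_zero]; rfl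
  | succ n ih =>
    rw [pow_succ', Module.End.mul_apply, ih, Umap_e]

lemma eval_basis (k : ℝ) (a : ℕ) (δ : Fin 2) (b : ℕ) :
    ((Umap : Module.End ℝ V) ^ a * (Smap : Module.End ℝ V) ^ (δ : ℕ) * Vmap k ^ b) (e (0, 0, 0))
      = e (a, δ, b) := by
  rw [Module.End.mul_apply, Module.End.mul_apply, Vpow_e, Spow_e, Upow_e]

end ShapRep

namespace GenShap

open ShapRep

variable {A : Type*} [Ring A] [Algebra ℝ A]

noncomputable def gf (x y s : A) (p : ℕ × Fin 2 × ℕ) : A :=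
  (x - y) ^ p.1 * s ^ (p.2.1 : ℕ) * (y + x) ^ p.2.2

lemma gsx (x s : A) (hss : s * s = 1) (hsx : s * x * s = -x) : s * x = -(x * s) := by
  have h := congrArg (· * s) hsx
  simp only [mul_assoc, hss, mul_one, neg_mul] at h
  exact h

lemma gsu (x y s : A) (hss : s * s = 1) (hsx : s * x * s = -x) (hsy : s * y * s = -y) :
    s * (x - y) = -((x - y) * s) := by
  rw [mul_sub, sub_mul, gsx x s hss hsx, gsx y s hss hsy]
  module

lemma gsv (x y s : A) (hss : s * s = 1) (hsx : s * x * s = -x) (hsy : s * y * s = -y) :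
    s * (y + x) = -((y + x) * s) := by
  rw [mul_add, add_mul, gsx x s hss hsx, gsx y s hss hsy]
  module

lemma gvs (x y s : A) (hss : s * s = 1) (hsx : s * x * s = -x) (hsy : s * y * s = -y) :
    (y + x) * s = -(s * (y + x)) := by
  rw [gsv x y s hss hsx hsy, neg_neg]

lemma gvu (k : ℝ) (x y s : A)
    (hc : y * x - x * y = (1/2 : ℝ) • (1 : A) + k • s) :
    (y + x) * (x - y) = (x - y) * (y + x) + 1 + (2 * k) • s := by
  have h : y * x = x * y + ((1/2 : ℝ) • (1 : A) + k • s) := by rw [← hc]; abel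
  rw [add_mul, mul_sub, mul_sub, sub_mul, mul_add, mul_add, h]
  module

lemma gspow (x y s : A) (hss : s * s = 1) (hsx : s * x * s = -x) (hsy : s * y * s = -y) :
    ∀ a : ℕ, s * (x - y) ^ a = ((-1 : ℝ) ^ a) • ((x - y) ^ a * s)
  | 0 => by simp
  | (n + 1) => by
    rw [pow_succ, ← mul_assoc, gspow x y s hss hsx hsy n, smul_mul_assoc, mul_assoc,
      gsu x y s hss hsx hsy, mul_neg, ← mul_assoc, ← pow_succ, pow_succ ((-1 : ℝ))]
    module

lemma gvpow (k : ℝ) (x y s : A)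
    (hc : y * x - x * y = (1/2 : ℝ) • (1 : A) + k • s)
    (hss : s * s = 1) (hsx : s * x * s = -x) (hsy : s * y * s = -y) :
    ∀ n : ℕ, (y + x) * (x - y) ^ (n + 1)
      = (x - y) ^ (n + 1) * (y + x) + ((n + 1 : ℕ) : ℝ) • (x - y) ^ n
        + (if Odd (n + 1) then 2 * k else 0) • ((x - y) ^ n * s) := by
  intro n
  induction n with
  | zero =>
    rw [pow_one, pow_zero, gvu k x y s hc]
    norm_num
  | succ n ih =>
    rw [pow_succ, ← mul_assoc, ih, add_mul, add_mul, smul_mul_assoc, smul_mul_assoc,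
      mul_assoc ((x - y) ^ (n + 1)), gvu k x y s hc, mul_assoc ((x - y) ^ n),
      gsu x y s hss hsx hsy, mul_neg, mul_add, mul_add, mul_one, mul_smul_comm,
      ← mul_assoc, ← mul_assoc, ← pow_succ, ← pow_succ]
    rcases Nat.even_or_odd (n + 1) with hn | hn
    · have h2 : Odd (n + 1 + 1) := by rw [Nat.odd_add_one, Nat.not_odd_iff_even]; exact hn
      rw [if_neg (Nat.not_odd_iff_even.mpr hn), if_pos h2]
      push_cast
      module
    · have h2 : ¬ Odd (n + 1 + 1) := by rw [Nat.odd_add_one]; simpa using hn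
      rw [if_pos hn, if_neg h2]
      push_cast
      module

lemma fin2cases (d : Fin 2) : d = 0 ∨ d = 1 := by
  fin_cases d
  · exact Or.inl rfl
  · exact Or.inr rfl

lemma hvtail (x y s : A)
    (hss : s * s = 1) (hsx : s * x * s = -x) (hsy : s * y * s = -y) (δ : Fin 2) (b : ℕ) :
    (y + x) * (s ^ (δ : ℕ) * (y + x) ^ b)
      = ((-1 : ℝ) ^ (δ : ℕ)) • (s ^ (δ : ℕ) * (y + x) ^ (b + 1)) := by
  rcases fin2cases δ with rfl | rfl
  · rw [Fin.val_zero, pow_zero, pow_zero, one_mul, one_mul, ← pow_succ', one_smul]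
  · rw [Fin.val_one, pow_one, pow_one, ← mul_assoc, gvs x y s hss hsx hsy, neg_mul,
      mul_assoc, ← pow_succ']
    module

noncomputable abbrev P (x y s : A) : Submodule ℝ A := Submodule.span ℝ (Set.range (gf x y s))

lemma gf_mem (x y s : A) (p : ℕ × Fin 2 × ℕ) : gf x y s p ∈ P x y s :=
  Submodule.subset_span ⟨p, rfl⟩

lemma mem_u (x y s : A) (p : ℕ × Fin 2 × ℕ) : (x - y) * gf x y s p ∈ P x y s := by
  obtain ⟨a, δ, b⟩ := p
  have h : (x - y) * gf x y s (a, δ, b) = gf x y s (a + 1, δ, b) := by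
    unfold gf
    dsimp only
    rw [← mul_assoc, ← mul_assoc, ← pow_succ']
  rw [h]
  exact gf_mem x y s _

lemma mem_s (x y s : A) (hss : s * s = 1) (hsx : s * x * s = -x) (hsy : s * y * s = -y)
    (p : ℕ × Fin 2 × ℕ) : s * gf x y s p ∈ P x y s := by
  obtain ⟨a, δ, b⟩ := p
  rcases fin2cases δ with rfl | rfl
  · have h : s * gf x y s (a, 0, b) = ((-1 : ℝ) ^ a) • gf x y s (a, 1, b) := by
      unfold gf
      dsimp only
      rw [Fin.val_zero, Fin.val_one, pow_zero, mul_one, pow_one, ← mul_assoc,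
        gspow x y s hss hsx hsy a, smul_mul_assoc]
    rw [h]
    exact Submodule.smul_mem _ _ (gf_mem x y s _)
  · have h : s * gf x y s (a, 1, b) = ((-1 : ℝ) ^ a) • gf x y s (a, 0, b) := by
      unfold gf
      dsimp only
      rw [Fin.val_zero, Fin.val_one, pow_zero, mul_one, pow_one, ← mul_assoc, ← mul_assoc,
        gspow x y s hss hsx hsy a, smul_mul_assoc, smul_mul_assoc,
        mul_assoc ((x - y) ^ a) s s, hss, mul_one]
    rw [h]
    exact Submodule.smul_mem _ _ (gf_mem x y s _)

lemma mem_v (k : ℝ) (x y s : A)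
    (hc : y * x - x * y = (1/2 : ℝ) • (1 : A) + k • s)
    (hss : s * s = 1) (hsx : s * x * s = -x) (hsy : s * y * s = -y)
    (p : ℕ × Fin 2 × ℕ) : (y + x) * gf x y s p ∈ P x y s := by
  obtain ⟨a, δ, b⟩ := p
  rcases a with _ | n
  · have h : (y + x) * gf x y s (0, δ, b)
        = ((-1 : ℝ) ^ (δ : ℕ)) • gf x y s (0, δ, b + 1) := by
      unfold gf
      dsimp only
      rw [pow_zero, one_mul, hvtail x y s hss hsx hsy δ b]
    rw [h]
    exact Submodule.smul_mem _ _ (gf_mem x y s _)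
  · have key : (y + x) * gf x y s (n + 1, δ, b)
        = ((-1 : ℝ) ^ (δ : ℕ)) • gf x y s (n + 1, δ, b + 1)
          + ((n + 1 : ℕ) : ℝ) • gf x y s (n, δ, b)
          + (if Odd (n + 1) then 2 * k else 0)
              • ((x - y) ^ n * s * (s ^ (δ : ℕ) * (y + x) ^ b)) := by
      unfold gf
      dsimp only
      rw [mul_assoc ((x - y) ^ (n + 1)), ← mul_assoc (y + x),
        gvpow k x y s hc hss hsx hsy n, add_mul, add_mul, smul_mul_assoc, smul_mul_assoc,
        mul_assoc ((x - y) ^ (n + 1)), hvtail x y s hss hsx hsy δ b, mul_smul_comm,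
        ← mul_assoc ((x - y) ^ (n + 1)), ← mul_assoc ((x - y) ^ n), mul_assoc ((x - y) ^ n)]
    rw [key]
    refine Submodule.add_mem _ (Submodule.add_mem _ ?_ ?_) ?_
    · exact Submodule.smul_mem _ _ (gf_mem x y s _)
    · exact Submodule.smul_mem _ _ (gf_mem x y s _)
    · refine Submodule.smul_mem _ _ ?_
      rcases fin2cases δ with rfl | rfl
      · have h : (x - y) ^ n * s * (s ^ ((0 : Fin 2) : ℕ) * (y + x) ^ b)
            = gf x y s (n, 1, b) := by
          unfold gf
          dsimp only
          rw [Fin.val_zero, Fin.val_one, pow_zero, one_mul, pow_one]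
        rw [h]
        exact gf_mem x y s _
      · have h : (x - y) ^ n * s * (s ^ ((1 : Fin 2) : ℕ) * (y + x) ^ b)
            = gf x y s (n, 0, b) := by
          unfold gf
          dsimp only
          rw [Fin.val_zero, Fin.val_one, pow_zero, mul_one, pow_one,
            mul_assoc ((x - y) ^ n), ← mul_assoc s s, hss, one_mul]
        rw [h]
        exact gf_mem x y s _

noncomputable def Tg (x y s : A) : ((ℕ × Fin 2 × ℕ) →₀ ℝ) →ₗ[ℝ] A :=
  Finsupp.lsum ℝ fun p => LinearMap.toSpanSingleton ℝ A (gf x y s p)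

lemma Tg_apply (x y s : A) (c : (ℕ × Fin 2 × ℕ) →₀ ℝ) :
    Tg x y s c = c.sum fun p r => r • gf x y s p := by
  rw [Tg, Finsupp.lsum_apply]
  rfl

lemma Tg_single (x y s : A) (p : ℕ × Fin 2 × ℕ) :
    Tg x y s (Finsupp.single p 1) = gf x y s p := by
  rw [Tg, Finsupp.lsum_single, LinearMap.toSpanSingleton_apply, one_smul]

lemma hrho_uv (k : ℝ) (x y s : A) (ρ : A →ₐ[ℝ] Module.End ℝ ShapRep.V)
    (hρx : ρ x = Xop k) (hρy : ρ y = Yop k) :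
    ρ (x - y) = Umap ∧ ρ (y + x) = Vmap k := by
  constructor
  · rw [map_sub, hρx, hρy]
    unfold Xop Yop
    module
  · rw [map_add, hρx, hρy]
    unfold Xop Yop
    module

lemma heval (k : ℝ) (x y s : A) (ρ : A →ₐ[ℝ] Module.End ℝ ShapRep.V)
    (hρx : ρ x = Xop k) (hρy : ρ y = Yop k) (hρs : ρ s = Smap) (p : ℕ × Fin 2 × ℕ) :
    ρ (gf x y s p) (e (0, 0, 0)) = e p := by
  obtain ⟨hu, hv⟩ := hrho_uv k x y s ρ hρx hρy
  obtain ⟨a, δ, b⟩ := p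
  unfold gf
  dsimp only
  rw [map_mul, map_mul, map_pow, map_pow, map_pow, hu, hv, hρs]
  exact eval_basis k a δ b

lemma Tg_inj (k : ℝ) (x y s : A) (ρ : A →ₐ[ℝ] Module.End ℝ ShapRep.V)
    (hρx : ρ x = Xop k) (hρy : ρ y = Yop k) (hρs : ρ s = Smap) :
    Function.Injective (Tg x y s) := by
  have hET : ∀ c : (ℕ × Fin 2 × ℕ) →₀ ℝ, ρ (Tg x y s c) (e (0, 0, 0)) = c := by
    intro c
    rw [Tg_apply, map_finsuppSum, LinearMap.finsupp_sum_apply]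
    have : ∀ p r, (ρ (r • gf x y s p)) (e (0, 0, 0)) = Finsupp.single p r := by
      intro p r
      rw [map_smul, LinearMap.smul_apply, heval k x y s ρ hρx hρy hρs, smul_e]
    rw [Finsupp.sum_congr fun p _ => this p (c p)]
    exact Finsupp.sum_single c
  intro c c' hcc
  have h := congrArg (fun h => ρ h (e (0, 0, 0))) hcc
  simpa only [hET] using h

lemma gf_zero (x y s : A) : gf x y s (0, 0, 0) = 1 := by
  unfold gf
  dsimp only
  rw [Fin.val_zero, pow_zero, pow_zero, pow_zero, mul_one, one_mul]

lemma Pmul_closed (x y s g : A) (hg : ∀ p, g * gf x y s p ∈ P x y s) :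
    ∀ m ∈ P x y s, g * m ∈ P x y s := by
  intro m hm
  induction hm using Submodule.span_induction with
  | mem z hz => obtain ⟨p, rfl⟩ := hz; exact hg p
  | zero => rw [mul_zero]; exact Submodule.zero_mem _
  | add a b _ _ ha hb => rw [mul_add]; exact Submodule.add_mem _ ha hb
  | smul r a _ ha => rw [mul_smul_comm]; exact Submodule.smul_mem _ _ ha

lemma gspan_top (k : ℝ) (x y s : A)
    (hc : y * x - x * y = (1/2 : ℝ) • (1 : A) + k • s)
    (hss : s * s = 1) (hsx : s * x * s = -x) (hsy : s * y * s = -y)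
    (hind : ∀ M : Submodule ℝ A, (1 : A) ∈ M → (∀ m ∈ M, x * m ∈ M) → (∀ m ∈ M, y * m ∈ M) →
      (∀ m ∈ M, s * m ∈ M) → ∀ a, a ∈ M)
    (h : A) : h ∈ P x y s := by
  have hu := Pmul_closed x y s (x - y) (mem_u x y s)
  have hv := Pmul_closed x y s (y + x) (mem_v k x y s hc hss hsx hsy)
  have hs := Pmul_closed x y s s (mem_s x y s hss hsx hsy)
  refine hind (P x y s) ?_ ?_ ?_ hs h
  · rw [← gf_zero x y s]; exact gf_mem x y s _
  · intro m hm
    have hx : x * m = (1/2 : ℝ) • ((x - y) * m + (y + x) * m) := by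
      rw [sub_mul, add_mul]; module
    rw [hx]
    exact Submodule.smul_mem _ _ (Submodule.add_mem _ (hu m hm) (hv m hm))
  · intro m hm
    have hy : y * m = (1/2 : ℝ) • ((y + x) * m - (x - y) * m) := by
      rw [sub_mul, add_mul]; module
    rw [hy]
    exact Submodule.smul_mem _ _ (Submodule.sub_mem _ (hv m hm) (hu m hm))

def swapEquiv : (ℕ × Fin 2 × ℕ) ≃ (ℕ × Fin 2 × ℕ) where
  toFun p := (p.2.2, p.2.1, p.1)
  invFun p := (p.2.2, p.2.1, p.1)
  left_inv p := rfl
  right_inv p := rfl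

theorem genMain (k : ℝ) (x y s : A)
    (hc : y * x - x * y = (1/2 : ℝ) • (1 : A) + k • s)
    (hss : s * s = 1) (hsx : s * x * s = -x) (hsy : s * y * s = -y)
    (ρ : A →ₐ[ℝ] Module.End ℝ ShapRep.V)
    (hρx : ρ x = Xop k) (hρy : ρ y = Yop k) (hρs : ρ s = Smap)
    (hind : ∀ M : Submodule ℝ A, (1 : A) ∈ M → (∀ m ∈ M, x * m ∈ M) → (∀ m ∈ M, y * m ∈ M) →
      (∀ m ∈ M, s * m ∈ M) → ∀ a, a ∈ M)
    (σ : A →ₗ[ℝ] A) (hσmul : ∀ a b : A, σ (a * b) = σ b * σ a) (hσone : σ 1 = 1)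
    (hσx : σ x = x) (hσy : σ y = -y) (hσs : σ s = s) :
    (∀ h : A, ∃! c : (ℕ × Fin 2 × ℕ) →₀ ℝ, h = c.sum fun p r => r • gf x y s p) ∧
    (∀ (h : A) (c c' : (ℕ × Fin 2 × ℕ) →₀ ℝ),
        h = (c.sum fun p r => r • gf x y s p) →
        σ h = (c'.sum fun p r => r • gf x y s p) →
        c (0, 0, 0) + c (0, 1, 0) = c' (0, 0, 0) + c' (0, 1, 0)) := by
  have hinj := Tg_inj k x y s ρ hρx hρy hρs
  have hex : ∀ h : A, ∃ c, h = Tg x y s c := by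
    intro h
    have hsp := gspan_top k x y s hc hss hsx hsy hind h
    have hle : P x y s ≤ LinearMap.range (Tg x y s) := by
      rw [Submodule.span_le]
      rintro w ⟨p, rfl⟩
      exact ⟨Finsupp.single p 1, Tg_single x y s p⟩
    obtain ⟨c, hc'⟩ := hle hsp
    exact ⟨c, hc'.symm⟩
  constructor
  · intro h
    obtain ⟨c, hc'⟩ := hex h
    refine ⟨c, by rw [hc', Tg_apply], ?_⟩
    intro c'' h''
    apply hinj
    rw [← Tg_apply] at h''
    exact h''.symm.trans hc'
  · have hσu : σ (x - y) = y + x := by rw [map_sub, hσx, hσy]; abel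
    have hσv : σ (y + x) = x - y := by rw [map_add, hσx, hσy]; abel
    have hσpow : ∀ g g' : A, σ g = g' → ∀ n, σ (g ^ n) = g' ^ n := by
      intro g g' hg n
      induction n with
      | zero => rw [pow_zero, pow_zero, hσone]
      | succ m ih => rw [pow_succ, hσmul, ih, hg, ← pow_succ']
    have hσgf : ∀ p : ℕ × Fin 2 × ℕ, σ (gf x y s p) = gf x y s (swapEquiv p) := by
      rintro ⟨a, δ, b⟩
      show σ (gf x y s (a, δ, b)) = gf x y s (b, δ, a)
      unfold gf
      dsimp only
      rw [hσmul, hσmul, hσpow _ _ hσv b, hσpow _ _ hσs (δ : ℕ), hσpow _ _ hσu a, ← mul_assoc]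
    intro h c c' h1 h2
    have e1 : σ h = Tg x y s (Finsupp.equivMapDomain swapEquiv c) := by
      rw [Tg_apply, Finsupp.sum_equivMapDomain, h1, map_finsuppSum]
      apply Finsupp.sum_congr
      intro p _
      rw [map_smul, hσgf]
    have e2 : Tg x y s c' = σ h := by rw [Tg_apply, h2]
    have e3 : c' = Finsupp.equivMapDomain swapEquiv c := hinj (e2.trans e1)
    rw [e3, Finsupp.equivMapDomain_apply, Finsupp.equivMapDomain_apply]
    rfl

end GenShap

/-- Defining relations of the rational Cherednik algebra `H''` of type A₁:
`[y,x] = 1/2 + k·s`, `s² = 1`, `sxs = -x`, `sys = -y`, on generators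
`0 ↦ x`, `1 ↦ y`, `2 ↦ s`. -/
inductive CherednikRel (k : ℝ) : FreeAlgebra ℝ (Fin 3) → FreeAlgebra ℝ (Fin 3) → Prop
  | comm : CherednikRel k
      (FreeAlgebra.ι ℝ 1 * FreeAlgebra.ι ℝ 0 - FreeAlgebra.ι ℝ 0 * FreeAlgebra.ι ℝ 1)
      ((1/2 : ℝ) • 1 + k • FreeAlgebra.ι ℝ 2)
  | ss : CherednikRel k (FreeAlgebra.ι ℝ 2 * FreeAlgebra.ι ℝ 2) 1
  | sxs : CherednikRel k (FreeAlgebra.ι ℝ 2 * FreeAlgebra.ι ℝ 0 * FreeAlgebra.ι ℝ 2)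
      (-FreeAlgebra.ι ℝ 0)
  | sys : CherednikRel k (FreeAlgebra.ι ℝ 2 * FreeAlgebra.ι ℝ 1 * FreeAlgebra.ι ℝ 2)
      (-FreeAlgebra.ι ℝ 1)

/-- The rational Cherednik algebra `H''` of type A₁ with parameter `k`. -/
abbrev RCA (k : ℝ) := RingQuot (CherednikRel k)

noncomputable def rcaX (k : ℝ) : RCA k := RingQuot.mkAlgHom ℝ _ (FreeAlgebra.ι ℝ 0)
noncomputable def rcaY (k : ℝ) : RCA k := RingQuot.mkAlgHom ℝ _ (FreeAlgebra.ι ℝ 1)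
noncomputable def rcaS (k : ℝ) : RCA k := RingQuot.mkAlgHom ℝ _ (FreeAlgebra.ι ℝ 2)

/-- The PBW-type basis element `((y+x)^*)^a s^δ (y+x)^b = (x-y)^a s^δ (x+y)^b`. -/
noncomputable def shapBasis (k : ℝ) (p : ℕ × Fin 2 × ℕ) : RCA k :=
  (rcaX k - rcaY k) ^ p.1 * rcaS k ^ (p.2.1 : ℕ) * (rcaY k + rcaX k) ^ p.2.2

namespace ShapAux

variable (k : ℝ)

lemma rel_comm : rcaY k * rcaX k - rcaX k * rcaY k = (1/2 : ℝ) • 1 + k • rcaS k := by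
  have h := RingQuot.mkAlgHom_rel ℝ (CherednikRel.comm (k := k))
  simpa [rcaX, rcaY, rcaS, map_sub, map_mul, map_add, map_smul, map_one] using h

lemma rel_ss : rcaS k * rcaS k = 1 := by
  have h := RingQuot.mkAlgHom_rel ℝ (CherednikRel.ss (k := k))
  simpa [rcaS, map_mul, map_one] using h

lemma rel_sxs : rcaS k * rcaX k * rcaS k = -rcaX k := by
  have h := RingQuot.mkAlgHom_rel ℝ (CherednikRel.sxs (k := k))
  simpa [rcaX, rcaS, map_mul, map_neg] using h

lemma rel_sys : rcaS k * rcaY k * rcaS k = -rcaY k := by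
  have h := RingQuot.mkAlgHom_rel ℝ (CherednikRel.sys (k := k))
  simpa [rcaY, rcaS, map_mul, map_neg] using h

/-- The representation of `H''` on `V` built from the normal-form operators. -/
noncomputable def rho : RCA k →ₐ[ℝ] Module.End ℝ ShapRep.V :=
  RingQuot.liftAlgHom ℝ
    ⟨FreeAlgebra.lift ℝ ![ShapRep.Xop k, ShapRep.Yop k, ShapRep.Smap], by
      intro a b r
      cases r with
      | comm =>
        simp only [map_sub, map_mul, map_add, map_smul, map_one, FreeAlgebra.lift_ι_apply,
          Matrix.cons_val_zero, Matrix.cons_val_one, Matrix.head_cons, Matrix.cons_val_two,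
          Matrix.tail_cons]
        exact ShapRep.rel_End_comm k
      | ss =>
        simp only [map_mul, map_one, FreeAlgebra.lift_ι_apply, Matrix.cons_val_two,
          Matrix.tail_cons, Matrix.head_cons]
        exact ShapRep.rel_SS
      | sxs =>
        simp only [map_mul, map_neg, FreeAlgebra.lift_ι_apply, Matrix.cons_val_zero,
          Matrix.cons_val_two, Matrix.tail_cons, Matrix.head_cons]
        exact ShapRep.rel_End_sxs k
      | sys =>
        simp only [map_mul, map_neg, FreeAlgebra.lift_ι_apply, Matrix.cons_val_one,
          Matrix.cons_val_two, Matrix.tail_cons, Matrix.head_cons]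
        exact ShapRep.rel_End_sys k⟩

lemma rho_x : rho k (rcaX k) = ShapRep.Xop k := by
  unfold rho rcaX
  rw [RingQuot.liftAlgHom_mkAlgHom_apply, FreeAlgebra.lift_ι_apply]
  simp

lemma rho_y : rho k (rcaY k) = ShapRep.Yop k := by
  unfold rho rcaY
  rw [RingQuot.liftAlgHom_mkAlgHom_apply, FreeAlgebra.lift_ι_apply]
  simp

lemma rho_s : rho k (rcaS k) = ShapRep.Smap := by
  unfold rho rcaS
  rw [RingQuot.liftAlgHom_mkAlgHom_apply, FreeAlgebra.lift_ι_apply]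
  simp

lemma rca_ind : ∀ M : Submodule ℝ (RCA k), (1 : RCA k) ∈ M →
    (∀ m ∈ M, rcaX k * m ∈ M) → (∀ m ∈ M, rcaY k * m ∈ M) → (∀ m ∈ M, rcaS k * m ∈ M) →
    ∀ a : RCA k, a ∈ M := by
  intro M h1 hx hy hs a
  obtain ⟨w, rfl⟩ := RingQuot.mkAlgHom_surjective ℝ (CherednikRel k) a
  have key : ∀ w : FreeAlgebra ℝ (Fin 3), ∀ m ∈ M,
      RingQuot.mkAlgHom ℝ (CherednikRel k) w * m ∈ M := by
    intro w
    induction w using FreeAlgebra.induction with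
    | grade0 r =>
      intro m hm
      have h : RingQuot.mkAlgHom ℝ (CherednikRel k) (algebraMap ℝ _ r) * m = r • m := by
        rw [AlgHom.commutes]
        exact (Algebra.smul_def r m).symm
      rw [h]
      exact Submodule.smul_mem _ _ hm
    | grade1 i =>
      fin_cases i
      · exact hx
      · exact hy
      · exact hs
    | mul a b ha hb =>
      intro m hm
      rw [map_mul, mul_assoc]
      exact ha _ (hb _ hm)
    | add a b ha hb =>
      intro m hm
      rw [map_add, add_mul]
      exact Submodule.add_mem _ (ha _ hm) (hb _ hm)
  have h := key w 1 h1
  rwa [mul_one] at h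

end ShapAux

/-- Shapovalov PBW property for `y + x`: every `h ∈ H''` is uniquely
`∑ c_{aδb} ((y+x)^*)^a s^δ (y+x)^b`, and the resulting coinvariant
`{h} = ∑_δ c_{0δ0}` satisfies `{σ(h)} = {h}` for the anti-involution `σ = *`
fixing `x, s` and negating `y`. -/
theorem shapovalov_pbw_and_coinvariant (k : ℝ)
    (σ : RCA k →ₗ[ℝ] RCA k)
    (hσmul : ∀ a b : RCA k, σ (a * b) = σ b * σ a) (hσone : σ 1 = 1)
    (hσx : σ (rcaX k) = rcaX k) (hσy : σ (rcaY k) = -rcaY k)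
    (hσs : σ (rcaS k) = rcaS k) :
    (∀ h : RCA k, ∃! c : (ℕ × Fin 2 × ℕ) →₀ ℝ,
        h = c.sum fun p r => r • shapBasis k p) ∧
    (∀ (h : RCA k) (c c' : (ℕ × Fin 2 × ℕ) →₀ ℝ),
        h = (c.sum fun p r => r • shapBasis k p) →
        σ h = (c'.sum fun p r => r • shapBasis k p) →
        c (0, 0, 0) + c (0, 1, 0) = c' (0, 0, 0) + c' (0, 1, 0)) := by
  exact GenShap.genMain k (rcaX k) (rcaY k) (rcaS k) (ShapAux.rel_comm k) (ShapAux.rel_ss k)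
    (ShapAux.rel_sxs k) (ShapAux.rel_sys k) (ShapAux.rho k) (ShapAux.rho_x k) (ShapAux.rho_y k)
    (ShapAux.rho_s k) (ShapAux.rca_ind k) σ hσmul hσone hσx hσy hσs
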